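/- arXiv:2509.23319 — 3 statements merged into one kernel-verified Lean document; each statement's English description precedes it below -/
import Mathlib

section
/- Let a < b be real numbers and let X = C([a, b]) be the Banach space of real-valued continuous functions on [a, b] with the supremum norm ‖x‖ = sup_{m ∈ [a,b]} |x(m)|. Then for every t ∈ [0, 1/2], C_Z^I(t) = t² − 2t + 1. -/
/-!
Writing `s • x + (1 - s) • y = ½ (x + y) + (s - ½)(x - y)` and using `‖x - y‖ = ‖x + y‖`, the
triangle inequality bounds both norms in the numerator by `(1 - t) ‖x + y‖`, so `C_Z^I(t) ≤ (1 - t)²`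
in every normed space. In `C(K)` the bound is attained by `x + y = 1` and `x - y = v` with `v` a
function of norm one taking the values `1` and `-1`: then `‖1 + s • v‖ = 1 + |s|` for every `s`.
-/

open Set

/-- `C_Z^I(t)`: the sup of `‖t•x + (1-t)•y‖ * ‖(1-t)•x + t•y‖ / ‖x+y‖²` over
pairs `(x, y) ≠ (0, 0)` that are isosceles orthogonal (`‖x+y‖ = ‖x-y‖`). -/
noncomputable def CZI (X : Type*) [NormedAddCommGroup X] [NormedSpace ℝ X] (t : ℝ) : ℝ :=
  sSup { r : ℝ | ∃ x y : X, (x, y) ≠ (0, 0) ∧ ‖x + y‖ = ‖x - y‖ ∧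
    r = ‖t • x + (1 - t) • y‖ * ‖(1 - t) • x + t • y‖ / ‖x + y‖ ^ 2 }

section IsoscelesOrthogonal

variable {X : Type*} [NormedAddCommGroup X] [NormedSpace ℝ X]

theorem norm_smul_add_one_sub_smul_le {x y : X} (h : ‖x + y‖ = ‖x - y‖) (s : ℝ) :
    ‖s • x + (1 - s) • y‖ ≤ (1 / 2 + |s - 1 / 2|) * ‖x + y‖ := by
  have e : s • x + (1 - s) • y = (1 / 2 : ℝ) • (x + y) + (s - 1 / 2) • (x - y) := by module
  calc ‖s • x + (1 - s) • y‖ ≤ ‖(1 / 2 : ℝ) • (x + y)‖ + ‖(s - 1 / 2) • (x - y)‖ :=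
        e ▸ norm_add_le _ _
    _ = (1 / 2 + |s - 1 / 2|) * ‖x + y‖ := by
        rw [norm_smul, norm_smul, ← h, Real.norm_eq_abs, Real.norm_eq_abs,
          abs_of_pos (by norm_num : (0 : ℝ) < 1 / 2)]
        ring

theorem isoscelesRatio_le {x y : X} (h : ‖x + y‖ = ‖x - y‖) {t : ℝ}
    (ht : t ∈ Icc (0 : ℝ) (1 / 2)) :
    ‖t • x + (1 - t) • y‖ * ‖(1 - t) • x + t • y‖ / ‖x + y‖ ^ 2 ≤ (1 - t) ^ 2 := by
  have h₁ := norm_smul_add_one_sub_smul_le h t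
  have h₂ := norm_smul_add_one_sub_smul_le h (1 - t)
  rw [abs_of_nonpos (by linarith [ht.2])] at h₁
  rw [sub_sub_cancel, abs_of_nonneg (by linarith [ht.2])] at h₂
  refine div_le_of_le_mul₀ (sq_nonneg _) (sq_nonneg _) ?_
  calc ‖t • x + (1 - t) • y‖ * ‖(1 - t) • x + t • y‖
      ≤ ((1 - t) * ‖x + y‖) * ((1 - t) * ‖x + y‖) := by
        gcongr
        · exact mul_nonneg (by linarith [ht.2]) (norm_nonneg _)
        · linarith
        · linarith
    _ = (1 - t) ^ 2 * ‖x + y‖ ^ 2 := by ring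

theorem CZI_le_one_sub_sq {t : ℝ} (ht : t ∈ Icc (0 : ℝ) (1 / 2)) : CZI X t ≤ (1 - t) ^ 2 :=
  Real.sSup_le (by rintro _ ⟨x, y, -, h, rfl⟩; exact isoscelesRatio_le h ht) (sq_nonneg _)

theorem one_sub_sq_le_CZI_of_norm_add_smul_eq {u v : X} (hv : ‖v‖ = 1)
    (huv : ∀ s : ℝ, ‖u + s • v‖ = 1 + |s|) {t : ℝ} (ht : t ∈ Icc (0 : ℝ) (1 / 2)) :
    (1 - t) ^ 2 ≤ CZI X t := by
  have hu : ‖u‖ = 1 := by simpa using huv 0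
  set x : X := (1 / 2 : ℝ) • (u + v)
  set y : X := (1 / 2 : ℝ) • (u - v)
  have hsum : x + y = u := by module
  have hdiff : x - y = v := by module
  have h₁ : ‖t • x + (1 - t) • y‖ = 1 - t := by
    rw [show t • x + (1 - t) • y = (1 / 2 : ℝ) • (u + (2 * t - 1) • v) by module, norm_smul, huv,
      abs_of_nonpos (by linarith [ht.2]), Real.norm_eq_abs, abs_of_pos (by norm_num)]
    ring
  have h₂ : ‖(1 - t) • x + t • y‖ = 1 - t := by
    rw [show (1 - t) • x + t • y = (1 / 2 : ℝ) • (u + (1 - 2 * t) • v) by module, norm_smul, huv,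
      abs_of_nonneg (by linarith [ht.2]), Real.norm_eq_abs, abs_of_pos (by norm_num)]
    ring
  refine le_csSup ⟨(1 - t) ^ 2, ?_⟩ ⟨x, y, ?_, ?_, ?_⟩
  · rintro _ ⟨x, y, -, h, rfl⟩
    exact isoscelesRatio_le h ht
  · intro h
    simp only [Prod.mk.injEq] at h
    rw [← hsum, h.1, h.2, add_zero, norm_zero] at hu
    exact zero_ne_one hu
  · rw [hsum, hdiff, hu, hv]
  · rw [h₁, h₂, hsum, hu]
    ring

end IsoscelesOrthogonal

namespace ContinuousMap

variable {K : Type*} [TopologicalSpace K] [CompactSpace K]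

theorem norm_one_add_smul_eq {v : C(K, ℝ)} (hv : ‖v‖ ≤ 1) {p q : K} (hp : v p = 1)
    (hq : v q = -1) (s : ℝ) : ‖1 + s • v‖ = 1 + |s| := by
  have : Nonempty K := ⟨p⟩
  apply le_antisymm
  · calc ‖1 + s • v‖ ≤ ‖(1 : C(K, ℝ))‖ + |s| * ‖v‖ := by
          rw [← Real.norm_eq_abs, ← norm_smul]
          exact norm_add_le _ _
      _ ≤ 1 + |s| := by
          rw [norm_one]
          gcongr
          exact mul_le_of_le_one_right (abs_nonneg s) hv
  · have hp' := norm_coe_le_norm (1 + s • v) p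
    have hq' := norm_coe_le_norm (1 + s • v) q
    simp only [add_apply, one_apply, smul_apply, smul_eq_mul, hp, hq, Real.norm_eq_abs] at hp' hq'
    rcases abs_cases s with ⟨hs, -⟩ | ⟨hs, -⟩
    · linarith [le_abs_self (1 + s * 1)]
    · linarith [le_abs_self (1 + s * -1)]

theorem exists_norm_eq_one_norm_one_add_smul_eq [T2Space K] {p q : K} (hpq : p ≠ q) :
    ∃ v : C(K, ℝ), ‖v‖ = 1 ∧ ∀ s : ℝ, ‖1 + s • v‖ = 1 + |s| := by
  obtain ⟨f, hfp, hfq, hf⟩ := exists_continuous_zero_one_of_isClosed isClosed_singleton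
    isClosed_singleton (disjoint_singleton.2 hpq)
  set v : C(K, ℝ) := 1 - (2 : ℝ) • f
  have hvp : v p = 1 := by simp [v, hfp rfl]
  have hvq : v q = -1 := by norm_num [v, hfq rfl]
  have hv : ‖v‖ ≤ 1 := (norm_le _ zero_le_one).2 fun k => by
    simp only [v, sub_apply, one_apply, smul_apply, smul_eq_mul, Real.norm_eq_abs, abs_le]
    constructor <;> linarith [(hf k).1, (hf k).2]
  refine ⟨v, le_antisymm hv ?_, norm_one_add_smul_eq hv hvp hvq⟩
  simpa [hvp] using norm_coe_le_norm v p

theorem CZI_eq_one_sub_sq [T2Space K] {p q : K} (hpq : p ≠ q) {t : ℝ}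
    (ht : t ∈ Icc (0 : ℝ) (1 / 2)) : CZI C(K, ℝ) t = (1 - t) ^ 2 := by
  obtain ⟨v, hv, huv⟩ := exists_norm_eq_one_norm_one_add_smul_eq hpq
  exact le_antisymm (CZI_le_one_sub_sq ht) (one_sub_sq_le_CZI_of_norm_add_smul_eq hv huv ht)

end ContinuousMap

theorem stmt_4 (a b : ℝ) (hab : a < b) :
    ∀ t ∈ Icc (0 : ℝ) (1 / 2),
      CZI C(Icc a b, ℝ) t = t ^ 2 - 2 * t + 1 := by
  intro t ht
  have hab' : (⟨a, left_mem_Icc.2 hab.le⟩ : Icc a b) ≠ ⟨b, right_mem_Icc.2 hab.le⟩ := by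
    simpa using hab.ne
  rw [ContinuousMap.CZI_eq_one_sub_sq hab' ht]
  ring
end

section
/- Let X be a nontrivial real Banach space. For every t ∈ [0, 1/2], C_Z^I(t) ≤ (1 − t)² + (1 − 2t)(1 − t)·H̃(X) + ((1 − 2t)²/2)·C_NJ(X). -/
open Set

/-- The constant `H̃(X)`. -/
noncomputable def Htilde (X : Type*) [NormedAddCommGroup X] [NormedSpace ℝ X] : ℝ :=
  sSup { r : ℝ | ∃ x y : X, (x, y) ≠ (0, 0) ∧ ‖x + y‖ = ‖x - y‖ ∧
    r = (‖x‖ + ‖y‖) / ‖x + y‖ }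

/-- The von Neumann–Jordan constant `C_NJ(X)`. -/
noncomputable def CNJ (X : Type*) [NormedAddCommGroup X] [NormedSpace ℝ X] : ℝ :=
  sSup { r : ℝ | ∃ x y : X, (x, y) ≠ (0, 0) ∧
    r = (‖x + y‖ ^ 2 + ‖x - y‖ ^ 2) / (2 * (‖x‖ ^ 2 + ‖y‖ ^ 2)) }

/-! Write `s = ‖x + y‖` for an isosceles orthogonal pair. Since
`t • x + (1 - t) • y = (1 - t) • (x + y) - (1 - 2t) • x`, the two factors are at most
`(1 - t) s + (1 - 2t) ‖x‖` and `(1 - t) s + (1 - 2t) ‖y‖`. Expanding the product, the cross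
term is controlled by `‖x‖ + ‖y‖ ≤ H̃(X) s`, and the last one by
`‖x‖ ‖y‖ ≤ (‖x‖² + ‖y‖²) / 2 ≤ C_NJ(X) s² / 2`, where the second inequality is the
definition of `C_NJ(X)` applied to the pair `(x + y, x - y)`. -/

section IsoscelesOrthogonal

variable {X : Type*} [SeminormedAddCommGroup X] [NormedSpace ℝ X] {x y : X}

theorem norm_le_norm_add_of_norm_add_eq_norm_sub (h : ‖x + y‖ = ‖x - y‖) :
    ‖x‖ ≤ ‖x + y‖ := by
  have h2 : ‖(2 : ℝ) • x‖ ≤ ‖x + y‖ + ‖x - y‖ := by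
    rw [show (2 : ℝ) • x = (x + y) + (x - y) by module]
    exact norm_add_le _ _
  rw [norm_smul, Real.norm_two, ← h] at h2
  linarith

theorem norm_le_norm_add_of_norm_add_eq_norm_sub' (h : ‖x + y‖ = ‖x - y‖) :
    ‖y‖ ≤ ‖x + y‖ := by
  rw [add_comm] at h ⊢
  exact norm_le_norm_add_of_norm_add_eq_norm_sub (h.trans (norm_sub_rev x y))

theorem norm_add_pos_of_norm_add_eq_norm_sub {X : Type*} [NormedAddCommGroup X]
    [NormedSpace ℝ X] {x y : X} (hxy : (x, y) ≠ (0, 0)) (h : ‖x + y‖ = ‖x - y‖) :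
    0 < ‖x + y‖ := by
  by_contra! hs
  have hx := (norm_le_norm_add_of_norm_add_eq_norm_sub h).trans hs
  have hy := (norm_le_norm_add_of_norm_add_eq_norm_sub' h).trans hs
  exact hxy (by simp [norm_le_zero_iff.mp hx, norm_le_zero_iff.mp hy])

end IsoscelesOrthogonal

theorem norm_smul_add_one_sub_smul_le_s10 {X : Type*} [SeminormedAddCommGroup X]
    [NormedSpace ℝ X] (x y : X) {t : ℝ} (ht : t ≤ 1 / 2) :
    ‖t • x + (1 - t) • y‖ ≤ (1 - t) * ‖x + y‖ + (1 - 2 * t) * ‖x‖ :=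
  calc ‖t • x + (1 - t) • y‖ = ‖(1 - t) • (x + y) - (1 - 2 * t) • x‖ := by congr 1; module
    _ ≤ ‖(1 - t) • (x + y)‖ + ‖(1 - 2 * t) • x‖ := norm_sub_le _ _
    _ = (1 - t) * ‖x + y‖ + (1 - 2 * t) * ‖x‖ := by
      rw [norm_smul, norm_smul, Real.norm_of_nonneg (by linarith),
        Real.norm_of_nonneg (by linarith)]

section Constants

variable {X : Type*} [NormedAddCommGroup X] [NormedSpace ℝ X]

theorem Htilde_nonneg : 0 ≤ Htilde X :=
  Real.sSup_nonneg (by rintro r ⟨x, y, -, -, rfl⟩; positivity)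

theorem CNJ_nonneg : 0 ≤ CNJ X :=
  Real.sSup_nonneg (by rintro r ⟨x, y, -, rfl⟩; positivity)

theorem norm_add_norm_le_Htilde_mul {x y : X} (hxy : (x, y) ≠ (0, 0))
    (h : ‖x + y‖ = ‖x - y‖) : ‖x‖ + ‖y‖ ≤ Htilde X * ‖x + y‖ := by
  have hbdd : BddAbove { r : ℝ | ∃ x y : X, (x, y) ≠ (0, 0) ∧ ‖x + y‖ = ‖x - y‖ ∧
      r = (‖x‖ + ‖y‖) / ‖x + y‖ } := by
    refine ⟨2, ?_⟩
    rintro r ⟨x, y, hxy, h, rfl⟩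
    rw [div_le_iff₀ (norm_add_pos_of_norm_add_eq_norm_sub hxy h)]
    linarith [norm_le_norm_add_of_norm_add_eq_norm_sub h,
      norm_le_norm_add_of_norm_add_eq_norm_sub' h]
  rw [← div_le_iff₀ (norm_add_pos_of_norm_add_eq_norm_sub hxy h)]
  exact le_csSup hbdd ⟨x, y, hxy, h, rfl⟩

theorem norm_sq_add_norm_sq_le_CNJ_mul {x y : X} (hxy : (x, y) ≠ (0, 0))
    (h : ‖x + y‖ = ‖x - y‖) : ‖x‖ ^ 2 + ‖y‖ ^ 2 ≤ CNJ X * ‖x + y‖ ^ 2 := by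
  have hbdd : BddAbove { r : ℝ | ∃ x y : X, (x, y) ≠ (0, 0) ∧
      r = (‖x + y‖ ^ 2 + ‖x - y‖ ^ 2) / (2 * (‖x‖ ^ 2 + ‖y‖ ^ 2)) } := by
    refine ⟨2, ?_⟩
    rintro r ⟨u, v, huv, rfl⟩
    have hpos : 0 < ‖u‖ ^ 2 + ‖v‖ ^ 2 := by
      rcases eq_or_ne u 0 with rfl | hu
      · have hv : v ≠ 0 := fun hv ↦ huv (by simp [hv])
        have := norm_pos_iff.mpr hv
        positivity
      · have := norm_pos_iff.mpr hu
        positivity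
    rw [div_le_iff₀ (by linarith)]
    nlinarith [norm_add_le u v, norm_sub_le u v, sq_nonneg (‖u‖ - ‖v‖), norm_nonneg u,
      norm_nonneg v, norm_nonneg (u + v), norm_nonneg (u - v)]
  have hs := norm_add_pos_of_norm_add_eq_norm_sub hxy h
  have hsum : x + y ≠ 0 := norm_pos_iff.mp hs
  have hx : ‖(x + y) + (x - y)‖ = 2 * ‖x‖ := by
    rw [show (x + y) + (x - y) = (2 : ℝ) • x by module, norm_smul, Real.norm_two]
  have hy : ‖(x + y) - (x - y)‖ = 2 * ‖y‖ := by
    rw [show (x + y) - (x - y) = (2 : ℝ) • y by module, norm_smul, Real.norm_two]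
  rw [← div_le_iff₀ (by positivity)]
  refine le_csSup hbdd ⟨x + y, x - y, by simp [hsum], ?_⟩
  rw [hx, hy, ← h]
  field_simp
  ring

theorem norm_mul_norm_le_of_norm_add_eq_norm_sub {x y : X} (hxy : (x, y) ≠ (0, 0))
    (h : ‖x + y‖ = ‖x - y‖) {t : ℝ} (ht : t ≤ 1 / 2) :
    ‖t • x + (1 - t) • y‖ * ‖(1 - t) • x + t • y‖ ≤
      ((1 - t) ^ 2 + (1 - 2 * t) * (1 - t) * Htilde X +
        ((1 - 2 * t) ^ 2 / 2) * CNJ X) * ‖x + y‖ ^ 2 := by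
  have hA := norm_smul_add_one_sub_smul_le_s10 x y ht
  have hB : ‖(1 - t) • x + t • y‖ ≤ (1 - t) * ‖x + y‖ + (1 - 2 * t) * ‖y‖ := by
    rw [add_comm, add_comm x]
    exact norm_smul_add_one_sub_smul_le_s10 y x ht
  have hH := norm_add_norm_le_Htilde_mul hxy h
  have hN := norm_sq_add_norm_sq_le_CNJ_mul hxy h
  have ht1 : 0 ≤ 1 - t := by linarith
  have ht3 : 0 ≤ 1 - 2 * t := by linarith
  calc ‖t • x + (1 - t) • y‖ * ‖(1 - t) • x + t • y‖
      ≤ ((1 - t) * ‖x + y‖ + (1 - 2 * t) * ‖x‖) *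
          ((1 - t) * ‖x + y‖ + (1 - 2 * t) * ‖y‖) :=
        mul_le_mul hA hB (norm_nonneg _) (by positivity)
    _ = (1 - t) ^ 2 * ‖x + y‖ ^ 2 + (1 - 2 * t) * (1 - t) * ‖x + y‖ * (‖x‖ + ‖y‖) +
          (1 - 2 * t) ^ 2 * (‖x‖ * ‖y‖) := by ring
    _ ≤ (1 - t) ^ 2 * ‖x + y‖ ^ 2 + (1 - 2 * t) * (1 - t) * ‖x + y‖ * (Htilde X * ‖x + y‖) +
          (1 - 2 * t) ^ 2 * (CNJ X * ‖x + y‖ ^ 2 / 2) := by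
        gcongr
        nlinarith [sq_nonneg (‖x‖ - ‖y‖)]
    _ = _ := by ring

end Constants

theorem stmt_10_general (X : Type*) [NormedAddCommGroup X] [NormedSpace ℝ X] :
    ∀ t ∈ Icc (0 : ℝ) (1 / 2),
      CZI X t ≤ (1 - t) ^ 2 + (1 - 2 * t) * (1 - t) * Htilde X +
        ((1 - 2 * t) ^ 2 / 2) * CNJ X := by
  rintro t ⟨-, ht⟩
  have hbound_nonneg : 0 ≤ (1 - t) ^ 2 + (1 - 2 * t) * (1 - t) * Htilde X +
      ((1 - 2 * t) ^ 2 / 2) * CNJ X := by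
    have ht1 : 0 ≤ 1 - t := by linarith
    have ht2 : 0 ≤ 1 - 2 * t := by linarith
    have := mul_nonneg (mul_nonneg ht2 ht1) (Htilde_nonneg (X := X))
    have := mul_nonneg (sq_nonneg (1 - 2 * t)) (CNJ_nonneg (X := X))
    nlinarith [sq_nonneg (1 - t)]
  refine Real.sSup_le ?_ hbound_nonneg
  rintro r ⟨x, y, hxy, h, rfl⟩
  have hs := norm_add_pos_of_norm_add_eq_norm_sub hxy h
  rw [div_le_iff₀ (by positivity)]
  exact norm_mul_norm_le_of_norm_add_eq_norm_sub hxy h ht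

theorem stmt_10 (X : Type*) [NormedAddCommGroup X] [NormedSpace ℝ X]
    [CompleteSpace X] [Nontrivial X] :
    ∀ t ∈ Icc (0 : ℝ) (1 / 2),
      CZI X t ≤ (1 - t) ^ 2 + (1 - 2 * t) * (1 - t) * Htilde X +
        ((1 - 2 * t) ^ 2 / 2) * CNJ X :=
  stmt_10_general X
end

section
/- Let X be a nontrivial real Banach space. For every t ∈ [0, 1/2], J(X)²/4 − t·J(X) − 3t² ≤ C_Z^I(t). -/
/-!
Put `u = x + y` and `v = x - y` for unit vectors `x, y`: then `‖u + v‖ = ‖u - v‖ = 2`, while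
`t • u + (1 - t) • v = (x - y) + 2t • y` and `(1 - t) • u + t • v = (x + y) - 2t • y`, so both
factors in `C_Z^I(t)` are at least `m - 2t`, where `m = min ‖x + y‖ ‖x - y‖`. Hence
`m² / 4 - t m - 3t² ≤ (m - 2t)² / 4 ≤ C_Z^I(t)` when `m ≥ 2t`, while for `m < 2t` the left side is
nonpositive. This closed condition on `m` passes to the supremum `J(X)`, which lies in the closure of
the set of such `m`.
-/

open Set

/-- The James constant `J(X)`. -/
noncomputable def JamesConst (X : Type*) [NormedAddCommGroup X] [NormedSpace ℝ X] : ℝ :=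
  sSup { r : ℝ | ∃ x y : X, ‖x‖ = 1 ∧ ‖y‖ = 1 ∧ r = min ‖x + y‖ ‖x - y‖ }

section

variable (X : Type*) [NormedAddCommGroup X]

def jamesSet : Set ℝ :=
  { r : ℝ | ∃ x y : X, ‖x‖ = 1 ∧ ‖y‖ = 1 ∧ r = min ‖x + y‖ ‖x - y‖ }

theorem jamesSet_subset_Icc : jamesSet X ⊆ Icc 0 2 := by
  rintro r ⟨x, y, hx, hy, rfl⟩
  refine ⟨le_min (norm_nonneg _) (norm_nonneg _), ?_⟩
  calc min ‖x + y‖ ‖x - y‖ ≤ ‖x + y‖ := min_le_left _ _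
    _ ≤ ‖x‖ + ‖y‖ := norm_add_le _ _
    _ = 2 := by rw [hx, hy]; norm_num

variable [NormedSpace ℝ X]

def cziSet (t : ℝ) : Set ℝ :=
  { r : ℝ | ∃ x y : X, (x, y) ≠ (0, 0) ∧ ‖x + y‖ = ‖x - y‖ ∧
    r = ‖t • x + (1 - t) • y‖ * ‖(1 - t) • x + t • y‖ / ‖x + y‖ ^ 2 }

theorem jamesSet_nonempty [Nontrivial X] : (jamesSet X).Nonempty := by
  obtain ⟨z, hz⟩ := exists_norm_eq X zero_le_one
  exact ⟨_, z, z, hz, hz, rfl⟩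

theorem norm_smul_add_smul_le_of_norm_add_eq_norm_sub {x y : X} (h : ‖x + y‖ = ‖x - y‖)
    (a b : ℝ) : ‖a • x + b • y‖ ≤ (|a + b| / 2 + |a - b| / 2) * ‖x + y‖ :=
  calc ‖a • x + b • y‖ = ‖((a + b) / 2) • (x + y) + ((a - b) / 2) • (x - y)‖ := by
        congr 1; module
    _ ≤ |a + b| / 2 * ‖x + y‖ + |a - b| / 2 * ‖x - y‖ := by
        refine (norm_add_le _ _).trans_eq ?_
        simp only [norm_smul, Real.norm_eq_abs, abs_div, abs_two]
    _ = (|a + b| / 2 + |a - b| / 2) * ‖x + y‖ := by rw [← h]; ring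

theorem cziSet_bddAbove (t : ℝ) : BddAbove (cziSet X t) := by
  refine ⟨(1 / 2 + |1 - 2 * t| / 2) ^ 2, ?_⟩
  rintro r ⟨x, y, -, h, rfl⟩
  have key (a b : ℝ) (hab : a + b = 1) (hab' : |a - b| = |1 - 2 * t|) :
      ‖a • x + b • y‖ ≤ (1 / 2 + |1 - 2 * t| / 2) * ‖x + y‖ := by
    simpa [hab, hab'] using norm_smul_add_smul_le_of_norm_add_eq_norm_sub X h a b
  have h₁ := key t (1 - t) (by ring) (by rw [← abs_neg]; ring_nf)
  have h₂ := key (1 - t) t (by ring) (by ring_nf)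
  refine div_le_of_le_mul₀ (by positivity) (by positivity) ?_
  calc ‖t • x + (1 - t) • y‖ * ‖(1 - t) • x + t • y‖
      ≤ ((1 / 2 + |1 - 2 * t| / 2) * ‖x + y‖) * ((1 / 2 + |1 - 2 * t| / 2) * ‖x + y‖) :=
        mul_le_mul h₁ h₂ (norm_nonneg _) (by positivity)
    _ = (1 / 2 + |1 - 2 * t| / 2) ^ 2 * ‖x + y‖ ^ 2 := by ring

theorem czi_nonneg (t : ℝ) : 0 ≤ CZI X t :=
  Real.sSup_nonneg fun r ⟨_, _, _, _, hr⟩ => hr ▸ by positivity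

theorem le_czi_of_norm_eq_one {x y : X} (hx : ‖x‖ = 1) (hy : ‖y‖ = 1) (t : ℝ) :
    ‖x - y + (2 * t) • y‖ * ‖x + y - (2 * t) • y‖ / 4 ≤ CZI X t := by
  have hsum : (x + y) + (x - y) = (2 : ℝ) • x := by module
  have hdiff : (x + y) - (x - y) = (2 : ℝ) • y := by module
  have hnorm_sum : ‖(x + y) + (x - y)‖ = 2 := by rw [hsum, norm_smul, hx]; norm_num
  have hnorm_diff : ‖(x + y) - (x - y)‖ = 2 := by rw [hdiff, norm_smul, hy]; norm_num
  refine le_csSup (cziSet_bddAbove X t) ⟨x + y, x - y, ?_, hnorm_sum.trans hnorm_diff.symm, ?_⟩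
  · intro h
    rw [Prod.mk.injEq] at h
    simp [h.1, h.2] at hnorm_sum
  · have e₁ : t • (x + y) + (1 - t) • (x - y) = x - y + (2 * t) • y := by module
    have e₂ : (1 - t) • (x + y) + t • (x - y) = x + y - (2 * t) • y := by module
    rw [hnorm_sum, e₁, e₂]
    norm_num

theorem le_czi_of_mem_jamesSet {t m : ℝ} (ht : 0 ≤ t) (hm : m ∈ jamesSet X) :
    m ^ 2 / 4 - t * m - 3 * t ^ 2 ≤ CZI X t := by
  obtain ⟨x, y, hx, hy, rfl⟩ := hm
  set m := min ‖x + y‖ ‖x - y‖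
  have h2ty : ‖(2 * t) • y‖ = 2 * t := by
    rw [norm_smul, hy, Real.norm_of_nonneg (by positivity), mul_one]
  have ha : m - 2 * t ≤ ‖x - y + (2 * t) • y‖ := by
    have := norm_sub_norm_le (x - y) (-((2 * t) • y))
    rw [sub_neg_eq_add, norm_neg, h2ty] at this
    linarith [min_le_right ‖x + y‖ ‖x - y‖]
  have hb : m - 2 * t ≤ ‖x + y - (2 * t) • y‖ := by
    have := norm_sub_norm_le (x + y) ((2 * t) • y)
    rw [h2ty] at this
    linarith [min_le_left ‖x + y‖ ‖x - y‖]
  have hm0 : 0 ≤ m := le_min (norm_nonneg _) (norm_nonneg _)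
  have hC := le_czi_of_norm_eq_one X hx hy t
  rcases le_or_gt (2 * t) m with hmt | hmt
  · have := mul_le_mul ha hb (by linarith) (norm_nonneg _)
    nlinarith
  · nlinarith [czi_nonneg X t]

end

theorem stmt_11_general (X : Type*) [NormedAddCommGroup X] [NormedSpace ℝ X]
    [Nontrivial X] :
    ∀ t ∈ Icc (0 : ℝ) (1 / 2),
      JamesConst X ^ 2 / 4 - t * JamesConst X - 3 * t ^ 2 ≤ CZI X t := by
  rintro t ⟨ht, -⟩
  have hJ : JamesConst X ∈ closure (jamesSet X) :=
    (isLUB_csSup (jamesSet_nonempty X) (bddAbove_Icc.mono (jamesSet_subset_Icc X)))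
      |>.mem_closure (jamesSet_nonempty X)
  have hclosed : IsClosed { m : ℝ | m ^ 2 / 4 - t * m - 3 * t ^ 2 ≤ CZI X t } :=
    isClosed_le (by fun_prop) continuous_const
  exact closure_minimal (fun m hm => le_czi_of_mem_jamesSet X ht hm) hclosed hJ

theorem stmt_11 (X : Type*) [NormedAddCommGroup X] [NormedSpace ℝ X]
    [CompleteSpace X] [Nontrivial X] :
    ∀ t ∈ Icc (0 : ℝ) (1 / 2),
      JamesConst X ^ 2 / 4 - t * JamesConst X - 3 * t ^ 2 ≤ CZI X t :=
  stmt_11_general X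
end
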